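/- Let A, B ⊆ ℕ. The limit lim_{n→∞} (B(n) - A(n))/n = L exists if and only if μ(B) - μ(A) = L for every density measure μ (finitely additive probability measure on P(ℕ) extending asymptotic density). -/
import Mathlib


open Filter

/-- `cnt A n` = number of elements of `A` in `[1, n]`, as a real number. -/
noncomputable def cnt (A : Set ℕ) (n : ℕ) : ℝ :=
  ∑ k ∈ Finset.Icc 1 n, A.indicator (fun _ => (1 : ℝ)) k

/-- `A` has asymptotic density `x`. -/
def HasDens (A : Set ℕ) (x : ℝ) : Prop :=
  Filter.Tendsto (fun n => cnt A n / n) Filter.atTop (nhds x)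

/-- A density measure: finitely additive probability measure on `P(ℕ)`
extending asymptotic density. -/
structure IsDensityMeasure (μ : Set ℕ → ℝ) : Prop where
  nonneg : ∀ A, 0 ≤ μ A
  le_one : ∀ A, μ A ≤ 1
  univ : μ Set.univ = 1
  additive : ∀ A B, Disjoint A B → μ (A ∪ B) = μ A + μ B
  extends_density : ∀ A x, HasDens A x → μ A = x

open scoped Classical

/-- Natural-number count of elements of `A` in `[1,n]`. -/
noncomputable def ncnt (A : Set ℕ) (n : ℕ) : ℕ :=
  ∑ k ∈ Finset.Icc 1 n, if k ∈ A then 1 else 0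

lemma cnt_eq_ncnt (A : Set ℕ) (n : ℕ) : cnt A n = (ncnt A n : ℝ) := by
  unfold cnt ncnt
  push_cast
  refine Finset.sum_congr rfl fun k _ => ?_
  by_cases h : k ∈ A <;> simp [h]

lemma ncnt_succ (A : Set ℕ) (n : ℕ) :
    ncnt A (n + 1) = ncnt A n + if n + 1 ∈ A then 1 else 0 := by
  unfold ncnt
  exact Finset.sum_Icc_succ_top (by omega) _

lemma cnt_nonneg (A : Set ℕ) (n : ℕ) : 0 ≤ cnt A n :=
  Finset.sum_nonneg fun k _ => Set.indicator_nonneg (fun _ _ => zero_le_one) k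

lemma cnt_le (A : Set ℕ) (n : ℕ) : cnt A n ≤ n := by
  have h : cnt A n ≤ ∑ k ∈ Finset.Icc 1 n, (1 : ℝ) := by
    refine Finset.sum_le_sum fun k _ => ?_
    by_cases h : k ∈ A <;> simp [Set.indicator_apply, h]
  have h2 : ∑ k ∈ Finset.Icc 1 n, (1 : ℝ) = n := by
    simp [Nat.card_Icc]
  linarith

lemma cnt_zero (A : Set ℕ) : cnt A 0 = 0 := by
  simp [cnt]

lemma cnt_union {A B : Set ℕ} (h : Disjoint A B) (n : ℕ) :
    cnt (A ∪ B) n = cnt A n + cnt B n := by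
  unfold cnt
  rw [← Finset.sum_add_distrib]
  refine Finset.sum_congr rfl fun k _ => ?_
  rw [Set.indicator_union_of_disjoint h]

lemma cnt_univ (n : ℕ) : cnt Set.univ n = n := by
  simp [cnt, Nat.card_Icc]

/-- The "every other element" subset of `E`. -/
def altSet (E : Set ℕ) : Set ℕ := {x | x ∈ E ∧ Odd (ncnt E x)}

lemma altSet_subset (E : Set ℕ) : altSet E ⊆ E := fun _ hx => hx.1

lemma ncnt_altSet (E : Set ℕ) (n : ℕ) :
    ncnt (altSet E) n = (ncnt E n + 1) / 2 := by
  induction n with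
  | zero => simp [ncnt]
  | succ n ih =>
    rw [ncnt_succ, ncnt_succ, ih]
    by_cases hE : n + 1 ∈ E
    · have h1 : ncnt E (n + 1) = ncnt E n + 1 := by rw [ncnt_succ]; simp [hE]
      have hmem : (n + 1 ∈ altSet E) ↔ Odd (ncnt E n + 1) := by
        simp only [altSet, Set.mem_setOf_eq, h1, hE, true_and]
      by_cases hpar : Odd (ncnt E n + 1)
      · rw [if_pos (hmem.2 hpar), if_pos hE]
        rw [Nat.odd_iff] at hpar
        omega
      · rw [if_neg (fun hc => hpar (hmem.1 hc)), if_pos hE]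
        rw [Nat.odd_iff] at hpar
        omega
    · have hmem : n + 1 ∉ altSet E := fun hc => hE hc.1
      rw [if_neg hmem, if_neg hE]
      omega

lemma cnt_altSet_near (E : Set ℕ) (n : ℕ) :
    |cnt (altSet E) n - cnt E n / 2| ≤ 1 := by
  rw [cnt_eq_ncnt, cnt_eq_ncnt, ncnt_altSet]
  set e := ncnt E n with he
  have h1 : (e : ℝ) ≤ 2 * ((e + 1) / 2 : ℕ) := by
    have : e ≤ 2 * ((e + 1) / 2) := by omega
    exact_mod_cast this
  have h2 : (2 * ((e + 1) / 2 : ℕ) : ℝ) ≤ e + 1 := by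
    have : 2 * ((e + 1) / 2) ≤ e + 1 := by omega
    exact_mod_cast this
  rw [abs_le]
  constructor <;> nlinarith [h1, h2]

theorem stmt_17 (A B : Set ℕ) (L : ℝ) :
    Filter.Tendsto (fun n => (cnt B n - cnt A n) / n) Filter.atTop (nhds L) ↔
      ∀ μ : Set ℕ → ℝ, IsDensityMeasure μ → μ B - μ A = L := by
  constructor
  · -- forward direction
    intro h μ hμ
    set C := B \ A with hC
    set D := A \ B with hD
    set E := (C ∪ D)ᶜ with hE
    set F := altSet E with hF
    -- basic counting identities
    have hCD : Disjoint C D := disjoint_sdiff_sdiff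
    have hEid : ∀ n : ℕ, cnt C n + cnt D n + cnt E n = n := by
      intro n
      have h1 : cnt ((C ∪ D) ∪ E) n = cnt (C ∪ D) n + cnt E n :=
        cnt_union disjoint_compl_right n
      have h2 : cnt (C ∪ D) n = cnt C n + cnt D n := cnt_union hCD n
      have h3 : (C ∪ D) ∪ E = Set.univ := Set.union_compl_self _
      rw [h3, cnt_univ] at h1
      linarith
    have hBid : ∀ n : ℕ, cnt B n = cnt C n + cnt (B ∩ A) n := by
      intro n
      have h1 : cnt ((B \ A) ∪ (B ∩ A)) n = cnt (B \ A) n + cnt (B ∩ A) n :=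
        cnt_union Set.disjoint_sdiff_inter n
      rw [Set.diff_union_inter] at h1
      exact h1
    have hAid : ∀ n : ℕ, cnt A n = cnt D n + cnt (B ∩ A) n := by
      intro n
      have h1 : cnt ((A \ B) ∪ (A ∩ B)) n = cnt (A \ B) n + cnt (A ∩ B) n :=
        cnt_union Set.disjoint_sdiff_inter n
      rw [Set.diff_union_inter] at h1
      rw [Set.inter_comm A B] at h1
      exact h1
    have hdiff : ∀ n : ℕ, cnt B n - cnt A n = cnt C n - cnt D n := by
      intro n; rw [hBid n, hAid n]; ring
    -- disjointness of F from C and D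
    have hFE : F ⊆ E := altSet_subset E
    have hCF : Disjoint C F :=
      Set.disjoint_left.2 fun x hxC hxF => (hFE hxF) (Set.mem_union_left _ hxC)
    have hDF : Disjoint D F :=
      Set.disjoint_left.2 fun x hxD hxF => (hFE hxF) (Set.mem_union_right _ hxD)
    -- the error term
    have hg : Tendsto (fun n : ℕ => (cnt F n - cnt E n / 2) / n) atTop (nhds 0) := by
      apply squeeze_zero_norm' (a := fun n : ℕ => 1 / (n : ℝ))
      · filter_upwards [eventually_ge_atTop 1] with n hn
        have hpos : (0 : ℝ) < n := by exact_mod_cast hn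
        rw [Real.norm_eq_abs, abs_div, abs_of_pos hpos, div_le_div_iff₀ hpos hpos]
        have := cnt_altSet_near E n
        nlinarith [this]
      · exact tendsto_one_div_atTop_nhds_zero_nat
    -- density of C ∪ F
    have hCFdens : HasDens (C ∪ F) ((1 + L) / 2) := by
      have hT : Tendsto
          (fun n : ℕ => 1 / 2 + ((cnt B n - cnt A n) / n) / 2 + (cnt F n - cnt E n / 2) / n)
          atTop (nhds (1 / 2 + L / 2 + 0)) :=
        (tendsto_const_nhds.add (h.div_const 2)).add hg
      have hEq : ∀ᶠ n : ℕ in atTop,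
          (fun n : ℕ => 1 / 2 + ((cnt B n - cnt A n) / n) / 2 + (cnt F n - cnt E n / 2) / n) n
            = cnt (C ∪ F) n / n := by
        filter_upwards [eventually_ge_atTop 1] with n hn
        have hpos : (0 : ℝ) < n := by exact_mod_cast hn
        have hne : (n : ℝ) ≠ 0 := ne_of_gt hpos
        have key : cnt (C ∪ F) n
            = (n : ℝ) / 2 + (cnt B n - cnt A n) / 2 + (cnt F n - cnt E n / 2) := by
          rw [cnt_union hCF, hdiff n]
          have := hEid n
          linarith
        rw [key]
        field_simp
      have := hT.congr' hEq
      unfold HasDens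
      convert this using 2
      ring
    -- density of D ∪ F
    have hDFdens : HasDens (D ∪ F) ((1 - L) / 2) := by
      have hT : Tendsto
          (fun n : ℕ => 1 / 2 - ((cnt B n - cnt A n) / n) / 2 + (cnt F n - cnt E n / 2) / n)
          atTop (nhds (1 / 2 - L / 2 + 0)) :=
        (tendsto_const_nhds.sub (h.div_const 2)).add hg
      have hEq : ∀ᶠ n : ℕ in atTop,
          (fun n : ℕ => 1 / 2 - ((cnt B n - cnt A n) / n) / 2 + (cnt F n - cnt E n / 2) / n) n
            = cnt (D ∪ F) n / n := by
        filter_upwards [eventually_ge_atTop 1] with n hn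
        have hpos : (0 : ℝ) < n := by exact_mod_cast hn
        have hne : (n : ℝ) ≠ 0 := ne_of_gt hpos
        have key : cnt (D ∪ F) n
            = (n : ℝ) / 2 - (cnt B n - cnt A n) / 2 + (cnt F n - cnt E n / 2) := by
          rw [cnt_union hDF, hdiff n]
          have := hEid n
          linarith
        rw [key]
        field_simp
      have := hT.congr' hEq
      unfold HasDens
      convert this using 2
      ring
    -- evaluate μ
    have e1 : μ C + μ F = (1 + L) / 2 := by
      rw [← hμ.additive C F hCF]
      exact hμ.extends_density _ _ hCFdens
    have e2 : μ D + μ F = (1 - L) / 2 := by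
      rw [← hμ.additive D F hDF]
      exact hμ.extends_density _ _ hDFdens
    have b1 : μ B = μ C + μ (B ∩ A) := by
      rw [← hμ.additive C (B ∩ A) Set.disjoint_sdiff_inter]
      congr 1
      exact (Set.diff_union_inter B A).symm
    have b2 : μ A = μ D + μ (A ∩ B) := by
      rw [← hμ.additive D (A ∩ B) Set.disjoint_sdiff_inter]
      congr 1
      exact (Set.diff_union_inter A B).symm
    have binter : μ (A ∩ B) = μ (B ∩ A) := by rw [Set.inter_comm]
    rw [b1, b2]
    linarith
  · -- backward direction
    intro h
    rw [tendsto_iff_ultrafilter]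
    intro U hU
    have key : ∀ S : Set ℕ, ∃ x : ℝ, Tendsto (fun n => cnt S n / n) (↑U) (nhds x) := by
      intro S
      have hmem : ∀ n : ℕ, cnt S n / n ∈ Set.Icc (0 : ℝ) 1 := by
        intro n
        constructor
        · exact div_nonneg (cnt_nonneg S n) (Nat.cast_nonneg n)
        · rcases Nat.eq_zero_or_pos n with h0 | hpos
          · subst h0; simp [cnt_zero]
          · have hpos' : (0 : ℝ) < n := by exact_mod_cast hpos
            rw [div_le_one hpos']
            exact cnt_le S n
      have hle : ↑(U.map (fun n => cnt S n / n)) ≤ 𝓟 (Set.Icc (0 : ℝ) 1) := by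
        rw [Ultrafilter.coe_map, le_principal_iff, Filter.mem_map]
        exact Filter.univ_mem' hmem
      obtain ⟨x, -, hx⟩ := isCompact_Icc.ultrafilter_le_nhds _ hle
      rw [Ultrafilter.coe_map] at hx
      exact ⟨x, hx⟩
    choose μ hμ using key
    have hdm : IsDensityMeasure μ := by
      constructor
      · intro S
        exact ge_of_tendsto' (hμ S) fun n => div_nonneg (cnt_nonneg S n) (Nat.cast_nonneg n)
      · intro S
        refine le_of_tendsto' (hμ S) fun n => ?_
        rcases Nat.eq_zero_or_pos n with h0 | hpos
        · subst h0; simp [cnt_zero]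
        · have hpos' : (0 : ℝ) < n := by exact_mod_cast hpos
          rw [div_le_one hpos']
          exact cnt_le S n
      · refine tendsto_nhds_unique (hμ Set.univ) ?_
        have hEq : (fun n : ℕ => cnt Set.univ n / n) =ᶠ[(↑U : Filter ℕ)]
            (fun _ => (1 : ℝ)) := by
          apply Filter.eventuallyEq_of_mem (hU (Filter.eventually_ge_atTop 1))
          intro n hn
          have hpos : (0 : ℝ) < n := by exact_mod_cast (hn : 1 ≤ n)
          simp [cnt_univ, div_self (ne_of_gt hpos)]
        exact tendsto_const_nhds.congr' hEq.symm
      · intro S T hd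
        refine tendsto_nhds_unique (hμ (S ∪ T)) ?_
        have : Tendsto (fun n => cnt S n / n + cnt T n / n) (↑U) (nhds (μ S + μ T)) :=
          (hμ S).add (hμ T)
        refine this.congr fun n => ?_
        rw [cnt_union hd, add_div]
      · intro S x hdens
        exact tendsto_nhds_unique (hμ S) (hdens.mono_left hU)
    have hval : μ B - μ A = L := h μ hdm
    have : Tendsto (fun n => (cnt B n - cnt A n) / n) (↑U) (nhds (μ B - μ A)) := by
      refine ((hμ B).sub (hμ A)).congr fun n => ?_
      rw [sub_div]
    rwa [hval] at this
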